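/- arXiv:2510.07443 — 3 statements merged into one kernel-verified Lean document; each statement's English description precedes it below -/
import Mathlib

section
/- Let X be a topological space, Y a compact Hausdorff topological space, and f : X → Y a continuous map. Then there exists a unique continuous map f̃ : MSpec(C(X,ℝ)) → Y such that f̃(ι_X(x)) = f(x) for all x ∈ X. -/
/-! The Zariski topology on the maximal spectrum, induced from the prime spectrum. -/
noncomputable instance maximalSpectrum.topologicalSpace (R : Type*) [CommRing R] :
    TopologicalSpace (MaximalSpectrum R) :=
  TopologicalSpace.induced MaximalSpectrum.toPrimeSpectrum inferInstance

/-- Evaluation at a point of `X`, as a ring homomorphism `C(X, ℝ) →+* ℝ`. -/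
def evalHom {X : Type*} [TopologicalSpace X] (x : X) : C(X, ℝ) →+* ℝ :=
  (Pi.evalRingHom (fun _ => ℝ) x).comp ContinuousMap.coeFnRingHom

/-- The ideal `m_x = {f : C(X, ℝ) | f x = 0}`, i.e. the kernel of evaluation at `x`, is maximal. -/
theorem ker_evalHom_isMaximal {X : Type*} [TopologicalSpace X] (x : X) :
    (RingHom.ker (evalHom x)).IsMaximal :=
  RingHom.ker_isMaximal_of_surjective _ fun r => ⟨ContinuousMap.const X r, rfl⟩

/-- The canonical map `ι_X : X → MSpec (C(X, ℝ))`, `x ↦ m_x = {f | f x = 0}`. -/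
noncomputable def iotaMax {X : Type*} [TopologicalSpace X] (x : X) :
    MaximalSpectrum C(X, ℝ) :=
  ⟨RingHom.ker (evalHom x), ker_evalHom_isMaximal x⟩

open Set

section aux
variable {X Y : Type*} [TopologicalSpace X] [TopologicalSpace Y]
  [CompactSpace Y] [T2Space Y] {f : X → Y}

/-- Precomposition with `f`, as a ring homomorphism `C(Y, ℝ) →+* C(X, ℝ)`. -/
noncomputable def phiHom (hf : Continuous f) : C(Y, ℝ) →+* C(X, ℝ) where
  toFun h := h.comp ⟨f, hf⟩
  map_one' := rfl
  map_mul' _ _ := rfl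
  map_zero' := rfl
  map_add' _ _ := rfl

omit [CompactSpace Y] [T2Space Y] in
/-- An element of a proper ideal of `C(Y, ℝ)` must vanish somewhere. -/
lemma exists_zero_of_mem {I : Ideal C(Y, ℝ)} (hI : I ≠ ⊤) {h : C(Y, ℝ)} (hh : h ∈ I) :
    ∃ y, h y = 0 := by
  by_contra hc
  push_neg at hc
  apply hI
  apply Ideal.eq_top_of_isUnit_mem _ hh
  exact IsUnit.of_mul_eq_one ⟨fun y => (h y)⁻¹, h.continuous.inv₀ hc⟩
    (ContinuousMap.ext fun y => mul_inv_cancel₀ (hc y))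

omit [T2Space Y] in
/-- There is a common zero in `Y` of all `h : C(Y, ℝ)` with `h ∘ f ∈ m`. -/
lemma exists_point (hf : Continuous f) (m : MaximalSpectrum C(X, ℝ)) :
    ∃ y : Y, ∀ h : C(Y, ℝ), phiHom hf h ∈ m.asIdeal → h y = 0 := by
  haveI := m.isMaximal.isPrime
  set S : Ideal C(Y, ℝ) := m.asIdeal.comap (phiHom hf) with hS
  haveI : S.IsPrime := Ideal.comap_isPrime _ _
  have hSne : S ≠ ⊤ := this.ne_top
  have key : (⋂ h : S, ((h : C(Y, ℝ)) ⁻¹' {0} : Set Y)).Nonempty := by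
    haveI : Nonempty S := ⟨⟨0, S.zero_mem⟩⟩
    apply IsCompact.nonempty_iInter_of_directed_nonempty_isCompact_isClosed
    · rintro ⟨a, ha⟩ ⟨b, hb⟩
      refine ⟨⟨a * a + b * b, S.add_mem (S.mul_mem_left a ha) (S.mul_mem_left b hb)⟩, ?_, ?_⟩ <;>
      · intro y hy
        simp only [mem_preimage, mem_singleton_iff, ContinuousMap.add_apply,
          ContinuousMap.mul_apply] at hy ⊢
        nlinarith [mul_self_nonneg (a y), mul_self_nonneg (b y)]
    · rintro ⟨a, ha⟩
      exact exists_zero_of_mem hSne ha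
    · intro h
      exact ((isClosed_singleton.preimage (h : C(Y, ℝ)).continuous)).isCompact
    · intro h
      exact isClosed_singleton.preimage (h : C(Y, ℝ)).continuous
  obtain ⟨y, hy⟩ := key
  refine ⟨y, fun h hh => ?_⟩
  have := mem_iInter.1 hy ⟨h, hh⟩
  simpa using this

/-- From a Urysohn function `k`, the first of two functions with product zero. -/
noncomputable def k₁ (k : C(Y, ℝ)) : C(Y, ℝ) :=
  (1 - ContinuousMap.const Y (3 : ℝ) * k) ⊔ 0

/-- From a Urysohn function `k`, the second of two functions with product zero. -/
noncomputable def k₂ (k : C(Y, ℝ)) : C(Y, ℝ) :=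
  (ContinuousMap.const Y (3 : ℝ) * k - ContinuousMap.const Y (2 : ℝ)) ⊔ 0

omit [CompactSpace Y] [T2Space Y] in
lemma k₁_apply (k : C(Y, ℝ)) (y : Y) : k₁ k y = max (1 - 3 * k y) 0 := by
  simp [k₁]

omit [CompactSpace Y] [T2Space Y] in
lemma k₂_apply (k : C(Y, ℝ)) (y : Y) : k₂ k y = max (3 * k y - 2) 0 := by
  simp [k₂]

omit [CompactSpace Y] [T2Space Y] in
lemma k_mul_eq_zero (k : C(Y, ℝ)) : k₁ k * k₂ k = 0 := by
  ext y
  rw [ContinuousMap.mul_apply, k₁_apply, k₂_apply, ContinuousMap.zero_apply]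
  rcases le_total (k y) (1/2) with h | h
  · have h2 : max (3 * k y - 2) 0 = 0 := max_eq_right (by linarith)
    rw [h2, mul_zero]
  · have h2 : max (1 - 3 * k y) 0 = 0 := max_eq_right (by linarith)
    rw [h2, zero_mul]

/-- Uniqueness of the common zero. -/
lemma point_unique (hf : Continuous f) (m : MaximalSpectrum C(X, ℝ)) {y₁ y₂ : Y}
    (h₁ : ∀ h : C(Y, ℝ), phiHom hf h ∈ m.asIdeal → h y₁ = 0)
    (h₂ : ∀ h : C(Y, ℝ), phiHom hf h ∈ m.asIdeal → h y₂ = 0) : y₁ = y₂ := by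
  by_contra hne
  obtain ⟨k, hk0, hk1, _⟩ := exists_continuous_zero_one_of_isClosed
    (isClosed_singleton (x := y₁)) (isClosed_singleton (x := y₂))
    (disjoint_singleton.2 hne)
  have hky₁ : k y₁ = 0 := hk0 rfl
  have hky₂ : k y₂ = 1 := hk1 rfl
  have hzero : phiHom hf (k₁ k) * phiHom hf (k₂ k) = 0 := by
    rw [← map_mul, k_mul_eq_zero, map_zero]
  have := m.isMaximal.isPrime.mem_or_mem (hzero ▸ m.asIdeal.zero_mem)
  rcases this with h | h
  · have := h₁ _ h
    rw [k₁_apply, hky₁] at this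
    norm_num at this
  · have := h₂ _ h
    rw [k₂_apply, hky₂] at this
    norm_num at this

/-- The extension of `f` to the maximal spectrum. -/
noncomputable def gmap (hf : Continuous f) (m : MaximalSpectrum C(X, ℝ)) : Y :=
  (exists_point hf m).choose

lemma gmap_spec (hf : Continuous f) (m : MaximalSpectrum C(X, ℝ)) :
    ∀ h : C(Y, ℝ), phiHom hf h ∈ m.asIdeal → h (gmap hf m) = 0 :=
  (exists_point hf m).choose_spec

lemma gmap_eval (hf : Continuous f) (x : X) : gmap hf (iotaMax x) = f x := by
  refine point_unique hf (iotaMax x) (gmap_spec hf _) fun h hh => ?_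
  have : (phiHom hf h) x = 0 := hh
  exact this

lemma gmap_continuous (hf : Continuous f) : Continuous (gmap hf) := by
  rw [continuous_def]
  intro V hV
  rw [isOpen_iff_forall_mem_open]
  intro m hm
  obtain ⟨k, hk0, hk1, _⟩ := exists_continuous_zero_one_of_isClosed
    (isClosed_singleton (x := gmap hf m)) hV.isClosed_compl
    (disjoint_singleton_left.2 (notMem_compl_iff.2 hm))
  refine ⟨MaximalSpectrum.toPrimeSpectrum ⁻¹'
      (PrimeSpectrum.basicOpen (phiHom hf (k₁ k)) : Set (PrimeSpectrum C(X, ℝ))), ?_, ?_, ?_⟩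
  · intro m' hm'
    have hnot : phiHom hf (k₁ k) ∉ m'.asIdeal := hm'
    have hzero : phiHom hf (k₁ k) * phiHom hf (k₂ k) = 0 := by
      rw [← map_mul, k_mul_eq_zero, map_zero]
    have hmem := (m'.isMaximal.isPrime.mem_or_mem
      (hzero ▸ m'.asIdeal.zero_mem)).resolve_left hnot
    have h2 := gmap_spec hf m' _ hmem
    by_contra hVm
    have : k (gmap hf m') = 1 := hk1 hVm
    rw [k₂_apply, this] at h2
    norm_num at h2
  · exact (PrimeSpectrum.isOpen_basicOpen).preimage continuous_induced_dom
  · show phiHom hf (k₁ k) ∉ m.asIdeal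
    intro hmem
    have := gmap_spec hf m _ hmem
    rw [k₁_apply, hk0 rfl] at this
    norm_num at this

end aux

/-- The image of `ι_X` is dense in the maximal spectrum. -/
lemma dense_range_iotaMax {X : Type*} [TopologicalSpace X] :
    Dense (Set.range (iotaMax (X := X))) := by
  rw [dense_iff_inter_open]
  rintro U hU ⟨m, hm⟩
  obtain ⟨W, hW, rfl⟩ := isOpen_induced_iff.1 hU
  obtain ⟨_, ⟨a, rfl⟩, hma, hsub⟩ :=
    PrimeSpectrum.isTopologicalBasis_basic_opens.exists_subset_of_mem_open hm hW
  have ha : a ∉ m.asIdeal := hma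
  have hane : a ≠ 0 := fun h => ha (h ▸ m.asIdeal.zero_mem)
  obtain ⟨x, hx⟩ : ∃ x, a x ≠ 0 := by
    by_contra hc
    push_neg at hc
    exact hane (ContinuousMap.ext hc)
  refine ⟨iotaMax x, ?_, ⟨x, rfl⟩⟩
  apply hsub
  show a ∉ (iotaMax x).asIdeal
  exact hx

/-- For any topological space `X`, any compact Hausdorff space `Y` and any continuous map
`f : X → Y`, there is a unique continuous map `f̃ : MSpec (C(X, ℝ)) → Y` with
`f̃ (ι_X x) = f x` for all `x : X`. -/
theorem stmt1 (X Y : Type*) [TopologicalSpace X] [TopologicalSpace Y]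
    [CompactSpace Y] [T2Space Y] (f : X → Y) (hf : Continuous f) :
    ∃! g : MaximalSpectrum C(X, ℝ) → Y,
      Continuous g ∧ ∀ x : X, g (iotaMax x) = f x := by
  refine ⟨gmap hf, ⟨gmap_continuous hf, gmap_eval hf⟩, ?_⟩
  rintro g' ⟨hc, he⟩
  refine Continuous.ext_on dense_range_iotaMax hc (gmap_continuous hf) ?_
  rintro _ ⟨x, rfl⟩
  rw [he, gmap_eval]
end

section
/- Let X be a topological space. Then there exists a homeomorphism h : StoneCech(X) → MSpec(C(X,ℝ)) such that h(η(x)) = ι_X(x) for every x ∈ X, where η : X → StoneCech(X) is the canonical unit map of the Stone–Čech compactification. In other words, (MSpec(C(X,ℝ)), ι_X) is a Čech–Stone compactification of X. -/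
open Set PrimeSpectrum

section Aux

/-- The inclusion of the maximal spectrum into the prime spectrum is continuous (with respect to
the induced topology defined above). -/
theorem contToPrime {R : Type*} [CommRing R] :
    Continuous (MaximalSpectrum.toPrimeSpectrum : MaximalSpectrum R → PrimeSpectrum R) :=
  continuous_induced_dom

/-- The maximal spectrum of a commutative ring is a compact space. -/
theorem maximalSpectrum_compactSpace (R : Type*) [CommRing R] :
    CompactSpace (MaximalSpectrum R) := by
  rcases subsingleton_or_nontrivial R with hR | hR
  · haveI : IsEmpty (MaximalSpectrum R) :=
      ⟨fun m => m.isMaximal.ne_top (Subsingleton.elim _ _)⟩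
    infer_instance
  constructor
  apply isCompact_of_finite_subfamily_closed
  intro ι Z hZc hZ
  choose C hCc hCe using fun i => isClosed_induced_iff.mp (hZc i)
  choose s hs using fun i => (isClosed_iff_zeroLocus _).mp (hCc i)
  have htop : Ideal.span (⋃ i, s i) = ⊤ := by
    by_contra hne
    obtain ⟨M, hM, hle⟩ := Ideal.exists_le_maximal _ hne
    have hmem : (⟨M, hM⟩ : MaximalSpectrum R) ∈ (univ : Set (MaximalSpectrum R)) ∩ ⋂ i, Z i := by
      refine ⟨trivial, mem_iInter.mpr fun i => ?_⟩
      rw [← hCe i]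
      rw [Set.mem_preimage, hs i, mem_zeroLocus]
      exact fun g hg => hle (Ideal.subset_span (Set.mem_iUnion.mpr ⟨i, hg⟩))
    rw [hZ] at hmem
    exact hmem
  have h1 : (1 : R) ∈ Ideal.span (⋃ i, s i) := htop ▸ Submodule.mem_top
  obtain ⟨T, hTsub, hT1⟩ := Submodule.mem_span_finite_of_mem_span h1
  choose idx hidx using fun t : { t // t ∈ T } => Set.mem_iUnion.mp (hTsub t.2)
  classical
  refine ⟨T.attach.image idx, ?_⟩
  rw [Set.eq_empty_iff_forall_notMem]
  rintro m ⟨-, hm⟩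
  have hTm : (T : Set R) ⊆ (m.asIdeal : Set R) := by
    intro t ht
    have h2 := Set.mem_iInter₂.mp hm (idx ⟨t, ht⟩)
      (Finset.mem_image.mpr ⟨⟨t, ht⟩, Finset.mem_attach _ _, rfl⟩)
    rw [← hCe _, Set.mem_preimage, hs _, mem_zeroLocus] at h2
    exact h2 (hidx ⟨t, ht⟩)
  have hone : (1 : R) ∈ m.asIdeal := Ideal.span_le.mpr hTm hT1
  exact m.isMaximal.ne_top ((Ideal.eq_top_iff_one _).mpr hone)

variable {X : Type*} [TopologicalSpace X]

theorem mem_iotaMax {c : C(X, ℝ)} {x : X} : c ∈ (iotaMax x).asIdeal ↔ c x = 0 :=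
  RingHom.mem_ker

/-- A continuous function bounded below by a positive constant is invertible. -/
theorem isUnit_of_le {f : C(X, ℝ)} {c : ℝ} (hc : 0 < c) (h : ∀ x, c ≤ f x) : IsUnit f := by
  have hne : ∀ x, f x ≠ 0 := fun x => ne_of_gt (lt_of_lt_of_le hc (h x))
  refine isUnit_iff_exists_inv.mpr ⟨⟨fun x => (f x)⁻¹, f.continuous.inv₀ hne⟩, ?_⟩
  ext x
  exact mul_inv_cancel₀ (hne x)

/-- An element of a maximal ideal of `C(X, ℝ)` together with a lower bound contradiction. -/
theorem not_mem_of_le {m : Ideal C(X, ℝ)} (hm : m.IsMaximal) {f : C(X, ℝ)} {c : ℝ}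
    (hc : 0 < c) (h : ∀ x, c ≤ f x) : f ∉ m := fun hf =>
  hm.ne_top (Ideal.eq_top_of_isUnit_mem _ hf (isUnit_of_le hc h))

theorem continuous_iotaMax : Continuous (iotaMax : X → MaximalSpectrum C(X, ℝ)) := by
  apply continuous_induced_rng.mpr
  apply (isTopologicalBasis_basic_opens (R := C(X, ℝ))).continuous_iff.mpr
  rintro - ⟨r, rfl⟩
  have : (MaximalSpectrum.toPrimeSpectrum ∘ iotaMax : X → PrimeSpectrum C(X, ℝ)) ⁻¹'
      (basicOpen r : Set (PrimeSpectrum C(X, ℝ))) = r ⁻¹' ({0}ᶜ : Set ℝ) := by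
    ext x
    simp only [Set.mem_preimage, Function.comp_apply, SetLike.mem_coe,
      mem_basicOpen, Set.mem_compl_iff, Set.mem_singleton_iff]
    exact not_congr mem_iotaMax
  show IsOpen ((MaximalSpectrum.toPrimeSpectrum ∘ iotaMax : X → PrimeSpectrum C(X, ℝ)) ⁻¹'
      (basicOpen r : Set (PrimeSpectrum C(X, ℝ))))
  rw [this]
  exact isOpen_compl_singleton.preimage r.continuous

/-- The maximal spectrum of `C(X, ℝ)` is Hausdorff. -/
theorem t2_maximalSpectrum : T2Space (MaximalSpectrum C(X, ℝ)) := by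
  constructor
  intro m₁ m₂ hne
  obtain ⟨g, hg1, hg2⟩ : ∃ g, g ∈ m₁.asIdeal ∧ g ∉ m₂.asIdeal := by
    have hne' : ¬m₁.asIdeal ≤ m₂.asIdeal := by
      intro hle
      exact hne (MaximalSpectrum.ext (m₁.isMaximal.eq_of_le m₂.isMaximal.ne_top hle))
    obtain ⟨g, hg1, hg2⟩ := SetLike.not_le_iff_exists.mp hne'
    exact ⟨g, hg1, hg2⟩
  obtain ⟨k, i, hi, hki⟩ := m₂.isMaximal.exists_inv hg2
  set w : C(X, ℝ) := k * g with hw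
  have hw1 : w ∈ m₁.asIdeal := Ideal.mul_mem_left _ _ hg1
  have hw2 : w - 1 ∈ m₂.asIdeal := by
    have : w - 1 = -i := by rw [hw, ← hki]; ring
    rw [this]
    exact neg_mem hi
  set a : C(X, ℝ) := (ContinuousMap.const X (1 / 3) - w ^ 2) ⊔ 0 with ha
  set b : C(X, ℝ) := (w ^ 2 - ContinuousMap.const X (2 / 3)) ⊔ 0 with hb
  have hab : a * b = 0 := by
    ext x
    simp only [ContinuousMap.mul_apply, ContinuousMap.zero_apply, ha, hb,
      ContinuousMap.sup_apply, ContinuousMap.sub_apply, ContinuousMap.const_apply,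
      ContinuousMap.pow_apply]
    rcases le_total ((w x) ^ 2) (2 / 3) with h | h
    · have : (w x ^ 2 - 2 / 3) ⊔ 0 = 0 := sup_eq_right.mpr (by linarith)
      rw [this, mul_zero]
    · have : (1 / 3 - w x ^ 2) ⊔ 0 = 0 := sup_eq_right.mpr (by linarith)
      rw [this, zero_mul]
  have hA : a ∉ m₁.asIdeal := by
    intro hA'
    refine not_mem_of_le m₁.isMaximal (by norm_num : (0 : ℝ) < 1 / 3) (f := a + w ^ 2) ?_
      (Ideal.add_mem _ hA' (Ideal.pow_mem_of_mem _ hw1 2 (by norm_num)))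
    intro x
    have h1 : (1 / 3 : ℝ) - w x ^ 2 ≤ a x := le_sup_left
    simp only [ContinuousMap.add_apply, ContinuousMap.pow_apply]
    linarith
  have hB : b ∉ m₂.asIdeal := by
    intro hB'
    have hsq : w ^ 2 - 1 ∈ m₂.asIdeal := by
      have : w ^ 2 - 1 = (w - 1) * (w + 1) := by ring
      rw [this]
      exact Ideal.mul_mem_right _ _ hw2
    refine not_mem_of_le m₂.isMaximal (by norm_num : (0 : ℝ) < 1 / 3) (f := b - (w ^ 2 - 1)) ?_
      (Ideal.sub_mem _ hB' hsq)
    intro x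
    have h1 : w x ^ 2 - 2 / 3 ≤ b x := le_sup_left
    simp only [ContinuousMap.sub_apply, ContinuousMap.pow_apply, ContinuousMap.one_apply]
    linarith
  refine ⟨MaximalSpectrum.toPrimeSpectrum ⁻¹' (basicOpen a : Set (PrimeSpectrum C(X, ℝ))),
    MaximalSpectrum.toPrimeSpectrum ⁻¹' (basicOpen b : Set (PrimeSpectrum C(X, ℝ))),
    (basicOpen a).isOpen.preimage contToPrime, (basicOpen b).isOpen.preimage contToPrime,
    hA, hB, ?_⟩
  rw [Set.disjoint_iff_inter_eq_empty, ← Set.preimage_inter, ← TopologicalSpace.Opens.coe_inf, ← basicOpen_mul,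
    hab, basicOpen_zero]
  simp

end Aux

/-- `(MSpec (C(X, ℝ)), ι_X)` is a Čech–Stone compactification of `X`: there is a homeomorphism
`h : StoneCech X ≃ₜ MSpec (C(X, ℝ))` with `h (η x) = ι_X x` for all `x : X`, where
`η : X → StoneCech X` is the canonical unit map. -/
theorem stmt2 (X : Type*) [TopologicalSpace X] :
    ∃ h : StoneCech X ≃ₜ MaximalSpectrum C(X, ℝ),
      ∀ x : X, h (stoneCechUnit x) = iotaMax x := by
  haveI : CompactSpace (MaximalSpectrum C(X, ℝ)) := maximalSpectrum_compactSpace _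
  haveI : T2Space (MaximalSpectrum C(X, ℝ)) := t2_maximalSpectrum
  have hcont : Continuous (iotaMax : X → MaximalSpectrum C(X, ℝ)) := continuous_iotaMax
  set h : StoneCech X → MaximalSpectrum C(X, ℝ) := stoneCechExtend hcont with hh
  have hext : ∀ x : X, h (stoneCechUnit x) = iotaMax x := fun x =>
    congrFun (stoneCechExtend_extends hcont) x
  -- Key lemma: membership in the extended maximal ideal from closure of zero sets.
  have key : ∀ (c : C(X, ℝ)) (p : StoneCech X),
      p ∈ closure (stoneCechUnit '' {x | c x = 0}) → c ∈ (h p).asIdeal := by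
    intro c p hp
    have hcl : IsClosed (h ⁻¹'
        (MaximalSpectrum.toPrimeSpectrum ⁻¹' (zeroLocus ({c} : Set C(X, ℝ))))) :=
      ((isClosed_zeroLocus _).preimage contToPrime).preimage (continuous_stoneCechExtend hcont)
    have hsub : stoneCechUnit '' {x | c x = 0} ⊆ h ⁻¹'
        (MaximalSpectrum.toPrimeSpectrum ⁻¹' (zeroLocus ({c} : Set C(X, ℝ)))) := by
      rintro - ⟨x, hx, rfl⟩
      simp only [Set.mem_preimage, hext x, mem_zeroLocus, Set.singleton_subset_iff,
        SetLike.mem_coe]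
      exact mem_iotaMax.mpr hx
    have := closure_minimal hsub hcl hp
    rw [Set.mem_preimage, Set.mem_preimage, mem_zeroLocus, Set.singleton_subset_iff] at this
    exact this
  -- Injectivity.
  have hinj : Function.Injective h := by
    intro p q hpq
    by_contra hne
    obtain ⟨F, hF0, hF1, -⟩ := exists_continuous_zero_one_of_isClosed
      (isClosed_singleton (x := p)) (isClosed_singleton (x := q))
      (Set.disjoint_singleton.mpr hne)
    set f : C(X, ℝ) := F.comp ⟨stoneCechUnit, continuous_stoneCechUnit⟩ with hf
    set a : C(X, ℝ) := (f - ContinuousMap.const X (1 / 3)) ⊔ 0 with hadef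
    set b : C(X, ℝ) := (ContinuousMap.const X (2 / 3) - f) ⊔ 0 with hbdef
    have hclosA : p ∈ closure (stoneCechUnit '' {x | a x = 0}) := by
      have hUo : IsOpen (F ⁻¹' Set.Iio (1 / 3)) := (isOpen_Iio).preimage F.continuous
      have hpU : p ∈ F ⁻¹' Set.Iio (1 / 3) := by
        have : F p = 0 := hF0 rfl
        simp [this]
      refine mem_closure_iff.mpr fun V hV hpV => ?_
      obtain ⟨x, hx⟩ := denseRange_stoneCechUnit.exists_mem_open (hV.inter hUo) ⟨p, hpV, hpU⟩
      refine ⟨stoneCechUnit x, hx.1, x, ?_, rfl⟩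
      have hfx : f x < 1 / 3 := hx.2
      show a x = 0
      simp only [hadef, ContinuousMap.sup_apply, ContinuousMap.sub_apply,
        ContinuousMap.const_apply, ContinuousMap.zero_apply]
      exact sup_eq_right.mpr (by linarith)
    have hclosB : q ∈ closure (stoneCechUnit '' {x | b x = 0}) := by
      have hUo : IsOpen (F ⁻¹' Set.Ioi (2 / 3)) := (isOpen_Ioi).preimage F.continuous
      have hqU : q ∈ F ⁻¹' Set.Ioi (2 / 3) := by
        have : F q = 1 := hF1 rfl
        simp [this]
        norm_num
      refine mem_closure_iff.mpr fun V hV hqV => ?_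
      obtain ⟨x, hx⟩ := denseRange_stoneCechUnit.exists_mem_open (hV.inter hUo) ⟨q, hqV, hqU⟩
      refine ⟨stoneCechUnit x, hx.1, x, ?_, rfl⟩
      have hfx : (2 / 3 : ℝ) < f x := hx.2
      show b x = 0
      simp only [hbdef, ContinuousMap.sup_apply, ContinuousMap.sub_apply,
        ContinuousMap.const_apply, ContinuousMap.zero_apply]
      exact sup_eq_right.mpr (by linarith)
    have hA : a ∈ (h q).asIdeal := hpq ▸ key a p hclosA
    have hB : b ∈ (h q).asIdeal := key b q hclosB
    refine not_mem_of_le (h q).isMaximal (by norm_num : (0 : ℝ) < 1 / 3) (f := a + b) ?_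
      (Ideal.add_mem _ hA hB)
    intro x
    have h1 : f x - 1 / 3 ≤ a x := le_sup_left
    have h2 : (2 / 3 : ℝ) - f x ≤ b x := le_sup_left
    simp only [ContinuousMap.add_apply]
    linarith
  -- Surjectivity.
  have hdense : Dense (Set.range (iotaMax : X → MaximalSpectrum C(X, ℝ))) := by
    rw [dense_iff_closure_eq]
    obtain ⟨C, hC, hCe⟩ := isClosed_induced_iff.mp
      (isClosed_closure (s := Set.range (iotaMax : X → MaximalSpectrum C(X, ℝ))))
    obtain ⟨s, rfl⟩ := (isClosed_iff_zeroLocus _).mp hC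
    have hs0 : ∀ g ∈ s, g = (0 : C(X, ℝ)) := by
      intro g hg
      ext x
      have hx : iotaMax x ∈ closure (Set.range (iotaMax : X → MaximalSpectrum C(X, ℝ))) :=
        subset_closure (Set.mem_range_self x)
      rw [← hCe, Set.mem_preimage, mem_zeroLocus] at hx
      exact mem_iotaMax.mp (hx hg)
    rw [← hCe]
    apply Set.eq_univ_of_forall
    intro m
    rw [Set.mem_preimage, mem_zeroLocus]
    intro g hg
    rw [hs0 g hg]
    exact (m.asIdeal).zero_mem
  have hsurj : Function.Surjective h := by
    have hrange : Set.range h = Set.univ := by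
      apply Set.eq_univ_of_univ_subset
      have hsub : Set.range (iotaMax : X → MaximalSpectrum C(X, ℝ)) ⊆ Set.range h := by
        rintro - ⟨x, rfl⟩
        exact ⟨stoneCechUnit x, hext x⟩
      calc (Set.univ : Set (MaximalSpectrum C(X, ℝ)))
          = closure (Set.range (iotaMax : X → MaximalSpectrum C(X, ℝ))) := hdense.closure_eq.symm
        _ ⊆ closure (Set.range h) := closure_mono hsub
        _ = Set.range h :=
            (isCompact_range (continuous_stoneCechExtend hcont)).isClosed.closure_eq
    intro m
    have : m ∈ Set.range h := hrange ▸ Set.mem_univ m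
    exact this
  let e : StoneCech X ≃ MaximalSpectrum C(X, ℝ) := Equiv.ofBijective h ⟨hinj, hsurj⟩
  exact ⟨Continuous.homeoOfEquivCompactToT2 (f := e) (continuous_stoneCechExtend hcont),
    fun x => hext x⟩
end

section
/- Let f : X → Y be a continuous map of topological spaces. Then there exists a unique continuous map f̃ : MSpec(C(X,ℝ)) → MSpec(C(Y,ℝ)) such that f̃(ι_X(x)) = ι_Y(f(x)) for all x ∈ X. -/
section Gelfand

variable {Z : Type*} [TopologicalSpace Z]

/-- Gelfand pair construction in `C(Z, ℝ)`. -/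
lemma gelfand_pair (a b : C(Z, ℝ)) (hab : a + b = 1) :
    ∃ r s : C(Z, ℝ), (1 + a * r) * (1 + b * s) = 0 := by
  have hmax : ∀ c : C(Z, ℝ), ∀ z : Z, max (c z) 2⁻¹ ≠ 0 := fun c z =>
    ne_of_gt (lt_of_lt_of_le (by norm_num) (le_max_right _ _))
  refine ⟨⟨fun z => -(max (a z) 2⁻¹)⁻¹,
      (((map_continuous a).max continuous_const).inv₀ (hmax a)).neg⟩,
    ⟨fun z => -(max (b z) 2⁻¹)⁻¹,
      (((map_continuous b).max continuous_const).inv₀ (hmax b)).neg⟩, ?_⟩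
  ext z
  have hz : a z + b z = 1 := by
    have := congrArg (fun c : C(Z, ℝ) => c z) hab
    simpa using this
  simp only [ContinuousMap.mul_apply, ContinuousMap.add_apply, ContinuousMap.one_apply,
    ContinuousMap.coe_mk, ContinuousMap.zero_apply]
  rcases le_or_gt (2⁻¹ : ℝ) (a z) with h | h
  · have h1 : max (a z) 2⁻¹ = a z := max_eq_left h
    have h0 : a z ≠ 0 := ne_of_gt (lt_of_lt_of_le (by norm_num) h)
    rw [h1, mul_neg, mul_inv_cancel₀ h0]
    ring
  · have hb : (2⁻¹ : ℝ) ≤ b z := by linarith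
    have h1 : max (b z) 2⁻¹ = b z := max_eq_left hb
    have h0 : b z ≠ 0 := ne_of_gt (lt_of_lt_of_le (by norm_num) hb)
    rw [h1, mul_neg, mul_neg, mul_inv_cancel₀ h0]
    ring

/-- Uniqueness of the maximal ideal above a prime ideal in `C(Z, ℝ)`. -/
lemma unique_max {p M N : Ideal C(Z, ℝ)} (hp : p.IsPrime)
    (hM : M.IsMaximal) (hN : N.IsMaximal) (hpM : p ≤ M) (hpN : p ≤ N) : M = N := by
  by_contra hne
  have hsup : M ⊔ N = ⊤ := Ideal.IsMaximal.coprime_of_ne hM hN hne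
  have h1 : (1 : C(Z, ℝ)) ∈ M ⊔ N := hsup ▸ Submodule.mem_top
  obtain ⟨a, haM, b, hbN, hab⟩ := Submodule.mem_sup.mp h1
  obtain ⟨r, s, huv⟩ := gelfand_pair a b hab
  have h0 : (1 + a * r) * (1 + b * s) ∈ p := huv ▸ p.zero_mem
  rcases hp.mem_or_mem h0 with h | h
  · exact hM.ne_top (Ideal.eq_top_of_isUnit_mem M
      (show (1 : C(Z, ℝ)) ∈ M by
        have : (1 : C(Z, ℝ)) = (1 + a * r) - a * r := by ring
        rw [this]; exact M.sub_mem (hpM h) (M.mul_mem_right r haM)) isUnit_one)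
  · exact hN.ne_top (Ideal.eq_top_of_isUnit_mem N
      (show (1 : C(Z, ℝ)) ∈ N by
        have : (1 : C(Z, ℝ)) = (1 + b * s) - b * s := by ring
        rw [this]; exact N.sub_mem (hpN h) (N.mul_mem_right s hbN)) isUnit_one)

/-- The Gelfand retraction: the (unique) maximal ideal above a prime of `C(Z, ℝ)`. -/
noncomputable def muMax (p : PrimeSpectrum C(Z, ℝ)) : MaximalSpectrum C(Z, ℝ) :=
  ⟨(p.asIdeal.exists_le_maximal p.isPrime.ne_top).choose,
   (p.asIdeal.exists_le_maximal p.isPrime.ne_top).choose_spec.1⟩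

lemma le_muMax (p : PrimeSpectrum C(Z, ℝ)) : p.asIdeal ≤ (muMax p).asIdeal :=
  (p.asIdeal.exists_le_maximal p.isPrime.ne_top).choose_spec.2

lemma muMax_eq_of_le (p : PrimeSpectrum C(Z, ℝ)) (M : MaximalSpectrum C(Z, ℝ))
    (h : p.asIdeal ≤ M.asIdeal) : muMax p = M :=
  MaximalSpectrum.ext (unique_max p.isPrime (muMax p).isMaximal M.isMaximal (le_muMax p) h)

lemma not_mem_muMax_iff (p : PrimeSpectrum C(Z, ℝ)) (a : C(Z, ℝ)) :
    a ∉ (muMax p).asIdeal ↔ ∃ c, 1 - c * a ∈ p.asIdeal := by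
  constructor
  · intro ha
    by_cases htop : p.asIdeal ⊔ Ideal.span {a} = ⊤
    · have h1 : (1 : C(Z, ℝ)) ∈ p.asIdeal ⊔ Ideal.span {a} := htop ▸ Submodule.mem_top
      obtain ⟨x, hx, y, hy, hxy⟩ := Submodule.mem_sup.mp h1
      obtain ⟨c, rfl⟩ := Ideal.mem_span_singleton'.mp hy
      exact ⟨c, by rw [show (1 : C(Z, ℝ)) - c * a = x by rw [← hxy]; ring]; exact hx⟩
    · exfalso
      obtain ⟨M, hM, hle⟩ := Ideal.exists_le_maximal _ htop
      have := muMax_eq_of_le p ⟨M, hM⟩ (le_trans le_sup_left hle)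
      exact ha (this ▸ (hle (le_sup_right (a := p.asIdeal)
        (Ideal.subset_span (Set.mem_singleton a)))))
  · rintro ⟨c, hc⟩ ha
    have h1 : (1 : C(Z, ℝ)) ∈ (muMax p).asIdeal := by
      have : (1 : C(Z, ℝ)) = (1 - c * a) + c * a := by ring
      rw [this]
      exact Ideal.add_mem _ (le_muMax p hc) ((muMax p).asIdeal.mul_mem_left c ha)
    exact (muMax p).isMaximal.ne_top (Ideal.eq_top_of_isUnit_mem _ h1 isUnit_one)

lemma continuous_muMax_toPrime :
    Continuous fun p : PrimeSpectrum C(Z, ℝ) => (muMax p).toPrimeSpectrum := by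
  rw [PrimeSpectrum.isTopologicalBasis_basic_opens.continuous_iff]
  rintro _ ⟨a, rfl⟩
  rw [isOpen_iff_forall_mem_open]
  intro p hp
  have hp' : a ∉ (muMax p).asIdeal := by
    exact hp
  obtain ⟨c, hc⟩ := (not_mem_muMax_iff p a).mp hp'
  obtain ⟨r, s, huv⟩ := gelfand_pair (c * a) (1 - c * a) (by ring)
  refine ⟨(PrimeSpectrum.basicOpen (1 + (1 - c * a) * s) : Set (PrimeSpectrum C(Z, ℝ))), ?_, ?_, ?_⟩
  · intro q hq
    have hvq : (1 + (1 - c * a) * s) ∉ q.asIdeal := hq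
    have hq0 : (1 + c * a * r) * (1 + (1 - c * a) * s) ∈ q.asIdeal := huv ▸ q.asIdeal.zero_mem
    have huq : (1 + c * a * r) ∈ q.asIdeal := (q.isPrime.mem_or_mem hq0).resolve_right hvq
    have : a ∉ (muMax q).asIdeal := by
      intro haq
      have h1 : (1 : C(Z, ℝ)) ∈ (muMax q).asIdeal := by
        have h2 : (1 : C(Z, ℝ)) = (1 + c * a * r) - c * a * r := by ring
        rw [h2]
        exact Ideal.sub_mem _ (le_muMax q huq)
          (by rw [mul_comm c a, mul_assoc]; exact Ideal.mul_mem_right _ _ haq)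
      exact (muMax q).isMaximal.ne_top (Ideal.eq_top_of_isUnit_mem _ h1 isUnit_one)
    exact this
  · exact (PrimeSpectrum.basicOpen _).isOpen
  · show (1 + (1 - c * a) * s) ∉ p.asIdeal
    intro hv
    have h1 : (1 : C(Z, ℝ)) ∈ p.asIdeal := by
      have h2 : (1 : C(Z, ℝ)) = (1 + (1 - c * a) * s) - (1 - c * a) * s := by ring
      rw [h2]
      exact Ideal.sub_mem _ hv (Ideal.mul_mem_right _ _ hc)
    exact p.isPrime.ne_top (Ideal.eq_top_of_isUnit_mem _ h1 isUnit_one)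

end Gelfand


section Topology

variable {Z : Type*} [TopologicalSpace Z]

lemma continuous_toPrime :
    Continuous (MaximalSpectrum.toPrimeSpectrum : MaximalSpectrum C(Z, ℝ) → _) :=
  continuous_induced_dom

/-- The maximal spectrum of `C(Z, ℝ)` is Hausdorff. -/
lemma t2_maxSpectrum : T2Space (MaximalSpectrum C(Z, ℝ)) := by
  constructor
  intro M N hMN
  have hne : M.asIdeal ≠ N.asIdeal := fun h => hMN (MaximalSpectrum.ext h)
  have hsup : M.asIdeal ⊔ N.asIdeal = ⊤ :=
    Ideal.IsMaximal.coprime_of_ne M.isMaximal N.isMaximal hne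
  have h1 : (1 : C(Z, ℝ)) ∈ M.asIdeal ⊔ N.asIdeal := hsup ▸ Submodule.mem_top
  obtain ⟨a, haM, b, hbN, hab⟩ := Submodule.mem_sup.mp h1
  obtain ⟨r, s, huv⟩ := gelfand_pair a b hab
  refine ⟨MaximalSpectrum.toPrimeSpectrum ⁻¹'
      (PrimeSpectrum.basicOpen (1 + a * r) : Set (PrimeSpectrum C(Z, ℝ))),
    MaximalSpectrum.toPrimeSpectrum ⁻¹'
      (PrimeSpectrum.basicOpen (1 + b * s) : Set (PrimeSpectrum C(Z, ℝ))),
    (PrimeSpectrum.basicOpen _).isOpen.preimage continuous_toPrime,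
    (PrimeSpectrum.basicOpen _).isOpen.preimage continuous_toPrime, ?_, ?_, ?_⟩
  · show (1 + a * r) ∉ M.asIdeal
    intro h
    exact M.isMaximal.ne_top (Ideal.eq_top_of_isUnit_mem _
      (show (1 : C(Z, ℝ)) ∈ M.asIdeal from by
        have h2 : (1 : C(Z, ℝ)) = (1 + a * r) - a * r := by ring
        rw [h2]; exact Ideal.sub_mem _ h (Ideal.mul_mem_right _ _ haM)) isUnit_one)
  · show (1 + b * s) ∉ N.asIdeal
    intro h
    exact N.isMaximal.ne_top (Ideal.eq_top_of_isUnit_mem _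
      (show (1 : C(Z, ℝ)) ∈ N.asIdeal from by
        have h2 : (1 : C(Z, ℝ)) = (1 + b * s) - b * s := by ring
        rw [h2]; exact Ideal.sub_mem _ h (Ideal.mul_mem_right _ _ hbN)) isUnit_one)
  · rw [Set.disjoint_left]
    intro P hPu hPv
    have h0 : (1 + a * r) * (1 + b * s) ∈ P.asIdeal := huv ▸ P.asIdeal.zero_mem
    rcases P.isMaximal.isPrime.mem_or_mem h0 with h | h
    · exact hPu h
    · exact hPv h

/-- The canonical image of `Z` is dense in the maximal spectrum of `C(Z, ℝ)`. -/
lemma dense_range_iotaMax_s15 : Dense (Set.range (iotaMax : Z → MaximalSpectrum C(Z, ℝ))) := by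
  rw [dense_iff_inter_open]
  rintro U hU ⟨M, hM⟩
  obtain ⟨V, hV, rfl⟩ := isOpen_induced_iff.mp hU
  obtain ⟨_, ⟨a, rfl⟩, haM, hsub⟩ :=
    PrimeSpectrum.isTopologicalBasis_basic_opens.exists_subset_of_mem_open hM hV
  have ha : a ∉ M.asIdeal := haM
  have ha0 : a ≠ 0 := fun h => ha (h ▸ M.asIdeal.zero_mem)
  obtain ⟨x, hx⟩ : ∃ x : Z, a x ≠ 0 := by
    by_contra h
    push_neg at h
    exact ha0 (ContinuousMap.ext h)
  refine ⟨iotaMax x, ⟨?_, ⟨x, rfl⟩⟩⟩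
  apply hsub
  show a ∉ (iotaMax x).asIdeal
  simpa [iotaMax, RingHom.mem_ker, evalHom] using hx

end Topology

/-- For any continuous map `f : X → Y` of topological spaces there is a unique continuous map
`f̃ : MSpec (C(X, ℝ)) → MSpec (C(Y, ℝ))` with `f̃ (ι_X x) = ι_Y (f x)` for all `x : X`. -/
theorem stmt15 (X Y : Type*) [TopologicalSpace X] [TopologicalSpace Y]
    (f : X → Y) (hf : Continuous f) :
    ∃! g : MaximalSpectrum C(X, ℝ) → MaximalSpectrum C(Y, ℝ),
      Continuous g ∧ ∀ x : X, g (iotaMax x) = iotaMax (f x) := by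
  let φ : C(Y, ℝ) →+* C(X, ℝ) :=
    { toFun := fun h => h.comp ⟨f, hf⟩
      map_one' := rfl
      map_mul' := fun _ _ => rfl
      map_zero' := rfl
      map_add' := fun _ _ => rfl }
  let g : MaximalSpectrum C(X, ℝ) → MaximalSpectrum C(Y, ℝ) :=
    fun M => muMax (PrimeSpectrum.comap φ M.toPrimeSpectrum)
  have hcont : Continuous g := by
    apply continuous_induced_rng.mpr
    exact continuous_muMax_toPrime.comp
      ((PrimeSpectrum.continuous_comap φ).comp continuous_toPrime)
  have hcomm : ∀ x : X, g (iotaMax x) = iotaMax (f x) := by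
    intro x
    apply muMax_eq_of_le
    intro h hh
    exact hh
  refine ⟨g, ⟨hcont, hcomm⟩, ?_⟩
  rintro g' ⟨hc', hx'⟩
  haveI : T2Space (MaximalSpectrum C(Y, ℝ)) := t2_maxSpectrum
  apply Continuous.ext_on dense_range_iotaMax_s15 hc' hcont
  rintro _ ⟨x, rfl⟩
  rw [hx' x, hcomm x]
end
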